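/- arXiv:1511.01009 — 2 statements merged into one kernel-verified Lean document; each statement's English description precedes it below -/
import Mathlib

section
/- Let ψ ∈ (−1,1), k ≥ 2, and let Γ be the k×k matrix with Γ_{i,j} = ψ^{|i−j|}. Then the operator norm of A = I − Γ^{-1} satisfies ‖A‖ ≤ 2|ψ|/(1−|ψ|). -/
/-- The ℓ²→ℓ² operator norm of a real matrix. -/
noncomputable def matOpNorm {n : Type*} [Fintype n] [DecidableEq n]
    (A : Matrix n n ℝ) : ℝ :=
  ‖LinearMap.toContinuousLinearMap (Matrix.toEuclideanLin A)‖

lemma schur_bound {k : ℕ} (A : Matrix (Fin k) (Fin k) ℝ) (C : ℝ) (hC : 0 ≤ C)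
    (hrow : ∀ i, ∑ j, |A i j| ≤ C) (hcol : ∀ j, ∑ i, |A i j| ≤ C) :
    matOpNorm A ≤ C := by
  refine ContinuousLinearMap.opNorm_le_bound _ hC (fun x => ?_)
  rw [LinearMap.coe_toContinuousLinearMap']
  have habs : ∀ i j, (0:ℝ) ≤ |A i j| := fun i j => abs_nonneg _
  have key : ∀ i : Fin k, (∑ j, A i j * x j) ^ 2 ≤ C * ∑ j, |A i j| * (x j)^2 := by
    intro i
    have h1 : (∑ j, A i j * x j) ^ 2 ≤ (∑ j, |A i j| * |x j|) ^ 2 := by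
      apply sq_le_sq'
      · rw [neg_le]
        refine le_trans (neg_le_abs _) ?_
        refine le_trans (Finset.abs_sum_le_sum_abs _ _) (le_of_eq ?_)
        simp [abs_mul]
      · refine le_trans (le_abs_self _) ?_
        refine le_trans (Finset.abs_sum_le_sum_abs _ _) (le_of_eq ?_)
        simp [abs_mul]
    have h2 : (∑ j, |A i j| * |x j|) ^ 2 ≤
        (∑ j, |A i j|) * ∑ j, |A i j| * (x j)^2 := by
      have := Finset.sum_mul_sq_le_sq_mul_sq Finset.univ
        (fun j => Real.sqrt |A i j|) (fun j => Real.sqrt |A i j| * |x j|)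
      calc (∑ j, |A i j| * |x j|) ^ 2
          = (∑ j, Real.sqrt |A i j| * (Real.sqrt |A i j| * |x j|)) ^ 2 := by
            congr 1; apply Finset.sum_congr rfl; intro j _
            rw [← mul_assoc, Real.mul_self_sqrt (habs i j)]
        _ ≤ (∑ j, Real.sqrt |A i j| ^ 2) * ∑ j, (Real.sqrt |A i j| * |x j|) ^ 2 := this
        _ = (∑ j, |A i j|) * ∑ j, |A i j| * (x j)^2 := by
            congr 1
            · apply Finset.sum_congr rfl; intro j _; exact Real.sq_sqrt (habs i j)
            · apply Finset.sum_congr rfl; intro j _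
              rw [mul_pow, Real.sq_sqrt (habs i j), sq_abs]
    refine le_trans h1 (le_trans h2 ?_)
    apply mul_le_mul_of_nonneg_right (hrow i)
    exact Finset.sum_nonneg fun j _ => mul_nonneg (habs i j) (sq_nonneg _)
  have hsum : ∑ i, (∑ j, A i j * x j) ^ 2 ≤ C^2 * ∑ j, (x j)^2 := by
    calc ∑ i, (∑ j, A i j * x j) ^ 2 ≤ ∑ i, C * ∑ j, |A i j| * (x j)^2 :=
          Finset.sum_le_sum fun i _ => key i
      _ = C * ∑ j, (∑ i, |A i j|) * (x j)^2 := by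
          rw [← Finset.mul_sum, Finset.sum_comm]
          congr 1; apply Finset.sum_congr rfl; intro j _
          rw [Finset.sum_mul]
      _ ≤ C * ∑ j, C * (x j)^2 := by
          apply mul_le_mul_of_nonneg_left _ hC
          exact Finset.sum_le_sum fun j _ =>
            mul_le_mul_of_nonneg_right (hcol j) (sq_nonneg _)
      _ = C^2 * ∑ j, (x j)^2 := by rw [← Finset.mul_sum]; ring
  have hy : Matrix.toEuclideanLin A x = fun i => ∑ j, A i j * x j := by
    funext i
    simp [Matrix.toEuclideanLin_apply, Matrix.mulVec, dotProduct]
  rw [EuclideanSpace.norm_eq, EuclideanSpace.norm_eq]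
  rw [show (C * Real.sqrt (∑ j, ‖x j‖^2)) = Real.sqrt (C^2 * ∑ j, ‖x j‖^2) by
    rw [Real.sqrt_mul (sq_nonneg C), Real.sqrt_sq hC]]
  apply Real.sqrt_le_sqrt
  calc ∑ i, ‖Matrix.toEuclideanLin A x i‖^2 = ∑ i, (∑ j, A i j * x j)^2 := by
        apply Finset.sum_congr rfl; intro i _
        rw [hy]; simp [Real.norm_eq_abs, sq_abs]
    _ ≤ C^2 * ∑ j, (x j)^2 := hsum
    _ = C^2 * ∑ j, ‖x j‖^2 := by simp [Real.norm_eq_abs, sq_abs]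


lemma fin_sum_ite_int_of {k : ℕ} (f : Fin k → ℝ) (c : ℤ) (c' : Fin k) (hc : (c':ℤ) = c) :
    (∑ l : Fin k, if (l:ℤ) = c then f l else 0) = f c' := by
  have hiff : ∀ l : Fin k, ((l:ℤ) = c) ↔ l = c' := by
    intro l
    constructor
    · intro hl; apply Fin.ext; omega
    · intro hl; subst hl; exact hc
  simp_rw [hiff]
  rw [Finset.sum_ite_eq']
  simp

lemma fin_sum_ite_int_zero {k : ℕ} (f : Fin k → ℝ) (c : ℤ) (hc : ¬(0 ≤ c ∧ c < k)) :
    (∑ l : Fin k, if (l:ℤ) = c then f l else 0) = 0 := by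
  apply Finset.sum_eq_zero
  intro l _
  rw [if_neg]
  intro hl
  have := l.isLt
  apply hc
  omega

lemma fin_sum_ite_le {k : ℕ} (c : ℤ) (a : ℝ) (ha : 0 ≤ a) :
    (∑ l : Fin k, if (l:ℤ) = c then a else 0) ≤ a := by
  by_cases h : 0 ≤ c ∧ c < k
  · rw [fin_sum_ite_int_of (fun _ => a) c ⟨c.toNat, by omega⟩ (by simp; omega)]
  · rw [fin_sum_ite_int_zero (fun _ => a) c h]; exact ha

noncomputable def Bmat (ψ : ℝ) (k : ℕ) : Matrix (Fin k) (Fin k) ℝ :=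
  Matrix.of fun l j => (1-ψ^2)⁻¹ *
    ((if l = j then (if (j:ℕ) = 0 ∨ (j:ℕ) = k-1 then 1 else 1+ψ^2) else 0)
      + (if (l:ℤ) = (j:ℤ)+1 then -ψ else 0)
      + (if (l:ℤ) = (j:ℤ)-1 then -ψ else 0))

lemma gamma_mul_B (ψ : ℝ) (hψ : |ψ| < 1) {k : ℕ} (hk : 2 ≤ k)
    (Γ : Matrix (Fin k) (Fin k) ℝ)
    (hΓ : ∀ i j : Fin k, Γ i j = ψ ^ ((i : ℤ) - (j : ℤ)).natAbs) :
    Γ * Bmat ψ k = 1 := by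
  have hψ2 : (0:ℝ) < 1 - ψ^2 := by nlinarith [abs_nonneg ψ, sq_abs ψ]
  have hr : (1-ψ^2)⁻¹ * (1-ψ^2) = 1 := inv_mul_cancel₀ (ne_of_gt hψ2)
  set r : ℝ := (1-ψ^2)⁻¹ with hrdef
  ext i j
  rw [Matrix.mul_apply, Matrix.one_apply]
  have step1 : (∑ l, Γ i l * Bmat ψ k l j) =
      r * ((∑ l, if l = j then Γ i l * (if (j:ℕ) = 0 ∨ (j:ℕ) = k-1 then 1 else 1+ψ^2) else 0)
        + (∑ l : Fin k, if (l:ℤ) = (j:ℤ)+1 then Γ i l * (-ψ) else 0)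
        + (∑ l : Fin k, if (l:ℤ) = (j:ℤ)-1 then Γ i l * (-ψ) else 0)) := by
    rw [← Finset.sum_add_distrib, ← Finset.sum_add_distrib, Finset.mul_sum]
    apply Finset.sum_congr rfl
    intro l _
    simp only [Bmat, Matrix.of_apply]
    rw [← hrdef]
    split_ifs <;> ring
  rw [step1]
  have hd : (∑ l, if l = j then Γ i l * (if (j:ℕ) = 0 ∨ (j:ℕ) = k-1 then 1 else 1+ψ^2) else 0)
      = Γ i j * (if (j:ℕ) = 0 ∨ (j:ℕ) = k-1 then 1 else 1+ψ^2) := by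
    rw [Finset.sum_ite_eq']; simp
  rw [hd]
  -- now case on j
  by_cases hm0 : (j:ℕ) = 0
  · -- j = 0 : no subdiagonal term (j-1 = -1), superdiagonal at 1
    rw [fin_sum_ite_int_zero _ ((j:ℤ)-1) (by omega)]
    rw [fin_sum_ite_int_of _ ((j:ℤ)+1) ⟨1, by omega⟩ (by simp; omega)]
    rw [if_pos (Or.inl hm0)]
    rw [hΓ, hΓ]
    by_cases hn0 : (i:ℕ) = 0
    · rw [if_pos (by apply Fin.ext; omega)]
      have e1 : ((i:ℤ) - (j:ℤ)).natAbs = 0 := by omega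
      have e2 : ((i:ℤ) - ((⟨1, by omega⟩ : Fin k):ℤ)).natAbs = 1 := by simp; omega
      rw [e1, e2]
      simp only [pow_zero, pow_one]
      linear_combination hr
    · rw [if_neg (by intro h; apply hn0; rw [h]; exact hm0)]
      have e1 : ((i:ℤ) - (j:ℤ)).natAbs = ((i:ℕ) - 1) + 1 := by omega
      have e2 : ((i:ℤ) - ((⟨1, by omega⟩ : Fin k):ℤ)).natAbs = (i:ℕ) - 1 := by simp; omega
      rw [e1, e2]
      ring
  · by_cases hmk : (j:ℕ) = k-1
    · -- j = k-1 : no superdiagonal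
      rw [fin_sum_ite_int_zero _ ((j:ℤ)+1) (by omega)]
      rw [fin_sum_ite_int_of _ ((j:ℤ)-1) ⟨k-2, by omega⟩ (by simp; omega)]
      rw [if_pos (Or.inr hmk)]
      rw [hΓ, hΓ]
      by_cases hnk : (i:ℕ) = k-1
      · rw [if_pos (by apply Fin.ext; omega)]
        have e1 : ((i:ℤ) - (j:ℤ)).natAbs = 0 := by omega
        have e2 : ((i:ℤ) - ((⟨k-2, by omega⟩ : Fin k):ℤ)).natAbs = 1 := by simp; omega
        rw [e1, e2]
        simp only [pow_zero, pow_one]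
        linear_combination hr
      · rw [if_neg (by intro h; apply hnk; rw [h]; exact hmk)]
        have hi := i.isLt
        have e1 : ((i:ℤ) - (j:ℤ)).natAbs = (k - 2 - (i:ℕ)) + 1 := by omega
        have e2 : ((i:ℤ) - ((⟨k-2, by omega⟩ : Fin k):ℤ)).natAbs = k - 2 - (i:ℕ) := by
          simp; omega
        rw [e1, e2]
        ring
    · -- interior j
      have hj := j.isLt
      rw [fin_sum_ite_int_of _ ((j:ℤ)+1) ⟨(j:ℕ)+1, by omega⟩ (by simp)]
      rw [fin_sum_ite_int_of _ ((j:ℤ)-1) ⟨(j:ℕ)-1, by omega⟩ (by simp; omega)]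
      rw [if_neg (by push_neg; exact ⟨hm0, hmk⟩)]
      rw [hΓ, hΓ, hΓ]
      rcases lt_trichotomy (i:ℕ) (j:ℕ) with hlt | heq | hgt
      · rw [if_neg (by intro h; rw [h] at hlt; omega)]
        have e1 : ((i:ℤ) - (j:ℤ)).natAbs = ((j:ℕ) - 1 - (i:ℕ)) + 1 := by omega
        have e2 : ((i:ℤ) - ((⟨(j:ℕ)+1, by omega⟩ : Fin k):ℤ)).natAbs
            = ((j:ℕ) - 1 - (i:ℕ)) + 2 := by simp; omega
        have e3 : ((i:ℤ) - ((⟨(j:ℕ)-1, by omega⟩ : Fin k):ℤ)).natAbs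
            = (j:ℕ) - 1 - (i:ℕ) := by simp; omega
        rw [e1, e2, e3]
        ring
      · rw [if_pos (by apply Fin.ext; omega)]
        have e1 : ((i:ℤ) - (j:ℤ)).natAbs = 0 := by omega
        have e2 : ((i:ℤ) - ((⟨(j:ℕ)+1, by omega⟩ : Fin k):ℤ)).natAbs = 1 := by simp; omega
        have e3 : ((i:ℤ) - ((⟨(j:ℕ)-1, by omega⟩ : Fin k):ℤ)).natAbs = 1 := by simp; omega
        rw [e1, e2, e3]
        simp only [pow_zero, pow_one]
        linear_combination hr
      · rw [if_neg (by intro h; rw [h] at hgt; omega)]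
        have e1 : ((i:ℤ) - (j:ℤ)).natAbs = ((i:ℕ) - (j:ℕ) - 1) + 1 := by omega
        have e2 : ((i:ℤ) - ((⟨(j:ℕ)+1, by omega⟩ : Fin k):ℤ)).natAbs
            = (i:ℕ) - (j:ℕ) - 1 := by simp; omega
        have e3 : ((i:ℤ) - ((⟨(j:ℕ)-1, by omega⟩ : Fin k):ℤ)).natAbs
            = ((i:ℕ) - (j:ℕ) - 1) + 2 := by simp; omega
        rw [e1, e2, e3]
        ring

lemma A_entry (ψ : ℝ) (hψ : |ψ| < 1) {k : ℕ} (hk : 2 ≤ k) (i j : Fin k) :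
    (1 - Bmat ψ k) i j =
      (if i = j then (if (j:ℕ) = 0 ∨ (j:ℕ) = k-1 then -(ψ^2*(1-ψ^2)⁻¹)
          else -(2*ψ^2*(1-ψ^2)⁻¹)) else 0)
      + ((if (i:ℤ) = (j:ℤ)+1 then ψ*(1-ψ^2)⁻¹ else 0)
      + (if (i:ℤ) = (j:ℤ)-1 then ψ*(1-ψ^2)⁻¹ else 0)) := by
  have hψ2 : (0:ℝ) < 1 - ψ^2 := by nlinarith [abs_nonneg ψ, sq_abs ψ]
  have hr : (1-ψ^2)⁻¹ * (1-ψ^2) = 1 := inv_mul_cancel₀ (ne_of_gt hψ2)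
  simp only [Matrix.sub_apply, Matrix.one_apply, Bmat, Matrix.of_apply]
  by_cases h1 : i = j
  · subst h1
    split_ifs <;> first | linear_combination -hr | (exfalso; omega) | simp_all
  · rw [if_neg h1, if_neg h1]
    split_ifs <;> first | ring1 | (exfalso; omega)

lemma A_row_sum (ψ : ℝ) (hψ : |ψ| < 1) {k : ℕ} (hk : 2 ≤ k) (i : Fin k) :
    ∑ j, |(1 - Bmat ψ k) i j| ≤ 2*|ψ|/(1-|ψ|) := by
  have hψ2 : (0:ℝ) < 1 - ψ^2 := by nlinarith [abs_nonneg ψ, sq_abs ψ]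
  have hinv : (0:ℝ) ≤ (1-ψ^2)⁻¹ := le_of_lt (inv_pos.mpr hψ2)
  have bound : ∀ j : Fin k, |(1 - Bmat ψ k) i j| ≤
      (if i = j then 2*ψ^2*(1-ψ^2)⁻¹ else 0)
      + ((if (j:ℤ) = (i:ℤ)-1 then |ψ| * (1-ψ^2)⁻¹ else 0)
      + (if (j:ℤ) = (i:ℤ)+1 then |ψ| * (1-ψ^2)⁻¹ else 0)) := by
    intro j
    rw [A_entry ψ hψ hk i j]
    refine le_trans (abs_add_le _ _) (add_le_add ?_ (le_trans (abs_add_le _ _)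
      (add_le_add ?_ ?_)))
    · split_ifs with h1 h2
      · rw [abs_neg, abs_of_nonneg (by positivity)]; nlinarith
      · rw [abs_neg, abs_of_nonneg (by positivity)]
      · simp
    · have hc : ((i:ℤ) = (j:ℤ)+1) ↔ ((j:ℤ) = (i:ℤ)-1) := by omega
      rw [if_congr hc rfl rfl]
      split_ifs
      · rw [abs_mul, abs_of_nonneg hinv]
      · simp
    · have hc : ((i:ℤ) = (j:ℤ)-1) ↔ ((j:ℤ) = (i:ℤ)+1) := by omega
      rw [if_congr hc rfl rfl]
      split_ifs
      · rw [abs_mul, abs_of_nonneg hinv]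
      · simp
  calc ∑ j, |(1 - Bmat ψ k) i j|
      ≤ ∑ j : Fin k, ((if i = j then 2*ψ^2*(1-ψ^2)⁻¹ else 0)
        + ((if (j:ℤ) = (i:ℤ)-1 then |ψ| * (1-ψ^2)⁻¹ else 0)
        + (if (j:ℤ) = (i:ℤ)+1 then |ψ| * (1-ψ^2)⁻¹ else 0))) :=
        Finset.sum_le_sum fun j _ => bound j
    _ = (∑ j : Fin k, if i = j then 2*ψ^2*(1-ψ^2)⁻¹ else 0)
        + ((∑ j : Fin k, if (j:ℤ) = (i:ℤ)-1 then |ψ| * (1-ψ^2)⁻¹ else 0)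
        + (∑ j : Fin k, if (j:ℤ) = (i:ℤ)+1 then |ψ| * (1-ψ^2)⁻¹ else 0)) := by
        rw [Finset.sum_add_distrib, Finset.sum_add_distrib]
    _ ≤ 2*ψ^2*(1-ψ^2)⁻¹ + (|ψ| * (1-ψ^2)⁻¹ + |ψ| * (1-ψ^2)⁻¹) := by
        refine add_le_add ?_ (add_le_add (fin_sum_ite_le _ _ (by positivity))
          (fin_sum_ite_le _ _ (by positivity)))
        rw [Finset.sum_ite_eq]
        simp
    _ = 2*|ψ|/(1-|ψ|) := by
        have ha : |ψ|^2 = ψ^2 := sq_abs ψ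
        rw [← ha, show (1:ℝ) - |ψ|^2 = (1-|ψ|)*(1+|ψ|) by ring]
        have h1 : (0:ℝ) < 1 - |ψ| := by linarith
        have h2 : (0:ℝ) < 1 + |ψ| := by positivity
        field_simp
        linear_combination


lemma A_symm (ψ : ℝ) (hψ : |ψ| < 1) {k : ℕ} (hk : 2 ≤ k) (i j : Fin k) :
    (1 - Bmat ψ k) i j = (1 - Bmat ψ k) j i := by
  rw [A_entry ψ hψ hk i j, A_entry ψ hψ hk j i]
  by_cases h : i = j
  · subst h
    split_ifs <;> first | ring1 | (exfalso; omega)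
  · have h' : ¬ j = i := fun hh => h hh.symm
    split_ifs <;> first | ring1 | (exfalso; omega) | simp_all

theorem stmt4 (ψ : ℝ) (hψ : ψ ∈ Set.Ioo (-1 : ℝ) 1) (k : ℕ) (hk : 2 ≤ k)
    (Γ : Matrix (Fin k) (Fin k) ℝ)
    (hΓ : ∀ i j : Fin k, Γ i j = ψ ^ ((i : ℤ) - (j : ℤ)).natAbs) :
    matOpNorm (1 - Γ⁻¹) ≤ 2 * |ψ| / (1 - |ψ|) := by
  have hψa : |ψ| < 1 := abs_lt.mpr ⟨hψ.1, hψ.2⟩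
  have hinv : Γ⁻¹ = Bmat ψ k := Matrix.inv_eq_right_inv (gamma_mul_B ψ hψa hk Γ hΓ)
  rw [hinv]
  refine schur_bound _ _ (div_nonneg (by positivity) (by linarith)) ?_ ?_
  · intro i
    exact le_of_le_of_eq (A_row_sum ψ hψa hk i) (by ring)
  · intro j
    rw [show (∑ i, |(1 - Bmat ψ k) i j|) = ∑ i, |(1 - Bmat ψ k) j i| from
      Finset.sum_congr rfl fun i _ => by rw [A_symm ψ hψa hk i j]]
    exact le_of_le_of_eq (A_row_sum ψ hψa hk j) (by ring)
end

section
/- Let Z, Z' be jointly standard Gaussian with covariance a, |a| ≤ 1/2, and u > 0 with q := 2Φ(u) − 1. Then Cov( 1{|Z| ≤ u}, 1{|Z'| ≤ u} ) ≤ q · a². -/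
open ProbabilityTheory MeasureTheory

/-- The standard normal CDF `Φ`. -/
noncomputable def stdNormCDF (u : ℝ) : ℝ := (gaussianReal 0 1 (Set.Iic u)).toReal

open Real
open scoped NNReal ENNReal


noncomputable def phi (x : ℝ) : ℝ := gaussianPDFReal 0 1 x

lemma phi_def (x : ℝ) : phi x = (Real.sqrt (2*π))⁻¹ * Real.exp (-x^2/2) := by
  simp [phi, gaussianPDFReal]

lemma phi_nonneg (x : ℝ) : 0 ≤ phi x := gaussianPDFReal_nonneg 0 1 x

lemma phi_even (x : ℝ) : phi (-x) = phi x := by simp [phi_def, neg_pow]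

lemma phi_anti {x y : ℝ} (hx : 0 ≤ x) (hxy : x ≤ y) : phi y ≤ phi x := by
  rw [phi_def, phi_def]
  exact mul_le_mul_of_nonneg_left (Real.exp_le_exp.mpr (by nlinarith)) (by positivity)

lemma toReal_gaussianReal_apply {m : ℝ} {v : ℝ≥0} (hv : v ≠ 0) (S : Set ℝ) :
    ((gaussianReal m v) S).toReal = ∫ x in S, gaussianPDFReal m v x := by
  rw [gaussianReal_apply_eq_integral m hv S, ENNReal.toReal_ofReal]
  exact integral_nonneg fun x => gaussianPDFReal_nonneg _ _ _

lemma intervalIntegrable_phi (c d : ℝ) : IntervalIntegrable phi volume c d :=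
  (integrable_gaussianPDFReal 0 1).intervalIntegrable

lemma toReal_icc {c d : ℝ} (hcd : c ≤ d) :
    ((gaussianReal 0 1) (Set.Icc c d)).toReal = ∫ t in c..d, phi t := by
  rw [toReal_gaussianReal_apply one_ne_zero, MeasureTheory.integral_Icc_eq_integral_Ioc,
    intervalIntegral.integral_of_le hcd]
  rfl



lemma integrable_phi : Integrable phi volume := integrable_gaussianPDFReal 0 1

lemma intervalIntegrable_phi_add (m c d : ℝ) :
    IntervalIntegrable (fun t => phi (t + m)) volume c d :=
  (integrable_phi.comp_add_right m).intervalIntegrable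

lemma phi_eq_abs (x : ℝ) : phi x = phi |x| := by
  rcases le_or_gt 0 x with h | h
  · rw [abs_of_nonneg h]
  · rw [abs_of_neg h, phi_even]

lemma phi_abs_anti {x y : ℝ} (h : |x| ≤ |y|) : phi y ≤ phi x := by
  rw [phi_eq_abs x, phi_eq_abs y]
  exact phi_anti (abs_nonneg x) h

lemma center_le_aux {m r : ℝ} (hr : 0 ≤ r) (hm : 0 ≤ m) :
    ∫ t in (m-r)..(m+r), phi t ≤ ∫ t in (-r)..r, phi t := by
  rcases le_or_gt (2*r) m with h2r | h2r
  · have h0 : ∫ t in (-r)..r, phi (t + m) = ∫ t in (-r+m)..(r+m), phi t :=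
      intervalIntegral.integral_comp_add_right phi m
    have e1 : m - r = -r + m := by ring
    have e2 : m + r = r + m := by ring
    rw [e1, e2, ← h0]
    apply intervalIntegral.integral_mono_on (by linarith)
      (intervalIntegrable_phi_add m (-r) r) (intervalIntegrable_phi _ _)
    intro t ht
    rw [Set.mem_Icc] at ht
    apply phi_abs_anti
    rw [abs_le]
    refine ⟨?_, ?_⟩
    · rw [neg_le]
      calc -t ≤ r := by linarith [ht.1]
        _ ≤ t + m := by linarith [ht.1]
        _ ≤ |t + m| := le_abs_self _
    · calc t ≤ r := ht.2
        _ ≤ t + m := by linarith [ht.1]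
        _ ≤ |t + m| := le_abs_self _
  · -- 0 ≤ m < 2r
    have key : ∫ t in r..(m+r), phi t ≤ ∫ t in (-r)..(m-r), phi t := by
      have h0 : ∫ t in (-r)..(m-r), phi (t + 2*r) = ∫ t in (-r+2*r)..(m-r+2*r), phi t :=
        intervalIntegral.integral_comp_add_right phi (2*r)
      have e1 : -r + 2*r = r := by ring
      have e2 : m - r + 2*r = m + r := by ring
      rw [e1, e2] at h0
      rw [← h0]
      apply intervalIntegral.integral_mono_on (by linarith)
        (intervalIntegrable_phi_add (2*r) (-r) (m-r)) (intervalIntegrable_phi _ _)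
      intro t ht
      rw [Set.mem_Icc] at ht
      apply phi_abs_anti
      rw [abs_le]
      refine ⟨?_, ?_⟩
      · rw [neg_le]
        calc -t ≤ t + 2*r := by linarith [ht.1]
          _ ≤ |t + 2*r| := le_abs_self _
      · calc t ≤ t + 2*r := by linarith
          _ ≤ |t + 2*r| := le_abs_self _
    have h1 : (∫ t in (-r)..(m-r), phi t) + ∫ t in (m-r)..r, phi t
        = ∫ t in (-r)..r, phi t :=
      intervalIntegral.integral_add_adjacent_intervals (intervalIntegrable_phi _ _)
        (intervalIntegrable_phi _ _)
    have h2 : (∫ t in (m-r)..r, phi t) + ∫ t in r..(m+r), phi t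
        = ∫ t in (m-r)..(m+r), phi t :=
      intervalIntegral.integral_add_adjacent_intervals (intervalIntegrable_phi _ _)
        (intervalIntegrable_phi _ _)
    linarith

lemma center_le {m r : ℝ} (hr : 0 ≤ r) :
    ∫ t in (m-r)..(m+r), phi t ≤ ∫ t in (-r)..r, phi t := by
  rcases le_or_gt 0 m with hm | hm
  · exact center_le_aux hr hm
  · have h0 : ∫ x in (-m-r)..(-m+r), phi (-x) = ∫ x in (-(-m+r))..(-(-m-r)), phi x :=
      intervalIntegral.integral_comp_neg phi
    have e1 : -(-m+r) = m - r := by ring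
    have e2 : -(-m-r) = m + r := by ring
    rw [e1, e2] at h0
    have h1 : ∫ x in (-m-r)..(-m+r), phi (-x) = ∫ x in (-m-r)..(-m+r), phi x :=
      intervalIntegral.integral_congr fun x _ => phi_even x
    rw [← h0, h1]
    exact center_le_aux hr (by linarith)


section
variable {a u : ℝ} (ha : |a| ≤ 1/2) (hu : 0 < u)

lemma ha2 (ha : |a| ≤ 1/2) : a^2 ≤ 1/4 := by
  have := abs_nonneg a
  nlinarith [sq_abs a]

lemma hs_sq (ha : |a| ≤ 1/2) : (Real.sqrt (1 - a^2))^2 = 1 - a^2 :=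
  Real.sq_sqrt (by nlinarith [ha2 ha])

lemma hs_pos (ha : |a| ≤ 1/2) : 0 < Real.sqrt (1 - a^2) :=
  Real.sqrt_pos.mpr (by nlinarith [ha2 ha])

lemma hs_ge (ha : |a| ≤ 1/2) : 1 - a^2 ≤ Real.sqrt (1 - a^2) := by
  nlinarith [hs_sq ha, hs_pos ha, ha2 ha, sq_nonneg a, sq_nonneg (Real.sqrt (1-a^2) - (1-a^2))]

lemma hs_le_one (ha : |a| ≤ 1/2) : Real.sqrt (1 - a^2) ≤ 1 := by
  nlinarith [hs_sq ha, hs_pos ha, sq_nonneg a]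

lemma tail_est (ha : |a| ≤ 1/2) (hu : 0 < u) :
    ∫ t in (-(u / Real.sqrt (1 - a^2)))..(u / Real.sqrt (1 - a^2)), phi t
      ≤ (∫ t in (-u)..u, phi t) + a^2 := by
  set s := Real.sqrt (1 - a^2) with hs
  have hs0 : 0 < s := hs_pos ha
  set r := u / s with hr
  have hur : u ≤ r := by
    rw [hr, le_div_iff₀ hs0]
    nlinarith [hs_le_one ha]
  -- split
  have h1 : (∫ t in (-r)..(-u), phi t) + ∫ t in (-u)..u, phi t = ∫ t in (-r)..u, phi t :=
    intervalIntegral.integral_add_adjacent_intervals (intervalIntegrable_phi _ _)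
      (intervalIntegrable_phi _ _)
  have h2 : (∫ t in (-r)..u, phi t) + ∫ t in u..r, phi t = ∫ t in (-r)..r, phi t :=
    intervalIntegral.integral_add_adjacent_intervals (intervalIntegrable_phi _ _)
      (intervalIntegrable_phi _ _)
  have hneg : ∫ t in (-r)..(-u), phi t = ∫ t in u..r, phi t := by
    have h0 : ∫ x in u..r, phi (-x) = ∫ x in (-r)..(-u), phi x :=
      intervalIntegral.integral_comp_neg phi
    have h1 : ∫ x in u..r, phi (-x) = ∫ x in u..r, phi x :=
      intervalIntegral.integral_congr fun x _ => phi_even x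
    rw [← h0, h1]
  have htail : ∫ t in u..r, phi t ≤ (r - u) * phi u := by
    have := intervalIntegral.integral_mono_on (μ := volume) (a := u) (b := r) hur
      (intervalIntegrable_phi _ _) (intervalIntegrable_const (c := phi u))
      (fun t ht => phi_anti hu.le (Set.mem_Icc.mp ht).1)
    simpa using this
  have hbound : 2 * ((r - u) * phi u) ≤ a^2 := by
    have hE : u * Real.exp (-u^2/2) ≤ 1 := by
      have h1 : u ≤ Real.exp (u^2/2) := by
        have := Real.add_one_le_exp (u^2/2)
        nlinarith [sq_nonneg (u - 1)]
      have h2 : Real.exp (-u^2/2) = (Real.exp (u^2/2))⁻¹ := by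
        rw [← Real.exp_neg]; ring_nf
      rw [h2]
      have h3 : 0 < Real.exp (u^2/2) := Real.exp_pos _
      rw [mul_inv_le_iff₀ h3, one_mul]
      exact h1
    have hE0 : 0 ≤ u * Real.exp (-u^2/2) := by positivity
    have hB : 1 - s ≤ a^2 := by nlinarith [hs_ge ha]
    have hB0 : 0 ≤ 1 - s := by nlinarith [hs_le_one ha]
    have hD : 2 ≤ s * Real.sqrt (2*π) := by
      have h2pi : (Real.sqrt (2*π))^2 = 2*π := Real.sq_sqrt (by positivity)
      have hpi := Real.pi_gt_three
      have hsq : (s * Real.sqrt (2*π))^2 = (1-a^2) * (2*π) := by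
        rw [mul_pow, h2pi, hs_sq ha]
      have h4 : 4 ≤ (s * Real.sqrt (2*π))^2 := by
        rw [hsq]; nlinarith [ha2 ha]
      nlinarith [mul_nonneg hs0.le (Real.sqrt_nonneg (2*π))]
    have hphiu : phi u = (Real.sqrt (2*π))⁻¹ * Real.exp (-u^2/2) := phi_def u
    have hrw : 2 * ((r - u) * phi u)
        = 2 * (u * Real.exp (-u^2/2)) * (1 - s) / (s * Real.sqrt (2*π)) := by
      rw [hphiu, hr]
      have hsπ : Real.sqrt (2*π) ≠ 0 := by positivity
      field_simp
    rw [hrw]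
    rw [div_le_iff₀ (by linarith)]
    nlinarith [sq_nonneg a]
  linarith

lemma cond_bound_int (ha : |a| ≤ 1/2) (hu : 0 < u) (m : ℝ) :
    ∫ t in ((-u-m)/Real.sqrt (1 - a^2))..((u-m)/Real.sqrt (1 - a^2)), phi t
      ≤ (∫ t in (-u)..u, phi t) + a^2 := by
  set s := Real.sqrt (1 - a^2) with hs
  have hs0 : 0 < s := hs_pos ha
  have e1 : (-u-m)/s = (-m/s) - u/s := by ring
  have e2 : (u-m)/s = (-m/s) + u/s := by ring
  rw [e1, e2]
  calc ∫ t in ((-m/s) - u/s)..((-m/s) + u/s), phi t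
      ≤ ∫ t in (-(u/s))..(u/s), phi t := center_le (by positivity)
    _ ≤ (∫ t in (-u)..u, phi t) + a^2 := tail_est ha hu
end


noncomputable def nvar (s : ℝ) : ℝ≥0 := ⟨s^2, sq_nonneg s⟩

lemma nvar_ne_zero {s : ℝ} (hs : 0 < s) : nvar s ≠ 0 := by
  intro h
  have h2 : ((nvar s : ℝ≥0) : ℝ) = s^2 := rfl
  rw [h, NNReal.coe_zero] at h2
  exact pow_ne_zero 2 hs.ne' h2.symm

/-- map of std gaussian under `y ↦ m + s y`. -/
lemma map_affine (m s : ℝ) :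
    (gaussianReal 0 1).map (fun y => m + s * y) = gaussianReal m (nvar s) := by
  have h1 : (gaussianReal 0 1).map (fun y => s * y) = gaussianReal 0 (nvar s) := by
    have := gaussianReal_map_const_mul (μ := 0) (v := 1) s
    rw [this, mul_zero, mul_one]; rfl
  have h2 : (fun y => m + s * y) = (fun z => m + z) ∘ (fun y => s * y) := rfl
  rw [h2, ← Measure.map_map (measurable_const_add m) (measurable_const_mul s), h1]
  have := gaussianReal_map_const_add (μ := 0) (v := nvar s) m
  simpa using this

lemma cond_measure (u m s : ℝ) (hs : 0 < s) :
    ((gaussianReal m (nvar s)) (Set.Icc (-u) u)).toReal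
      = ((gaussianReal 0 1) (Set.Icc ((-u-m)/s) ((u-m)/s))).toReal := by
  rw [← map_affine m s, Measure.map_apply (by fun_prop) measurableSet_Icc]
  have hset : (fun y => m + s*y) ⁻¹' (Set.Icc (-u) u) = Set.Icc ((-u-m)/s) ((u-m)/s) := by
    ext y
    simp only [Set.mem_preimage, Set.mem_Icc]
    constructor
    · rintro ⟨h1, h2⟩
      constructor
      · rw [div_le_iff₀ hs]; linarith
      · rw [le_div_iff₀ hs]; linarith
    · rintro ⟨h1, h2⟩
      rw [div_le_iff₀ hs] at h1
      rw [le_div_iff₀ hs] at h2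
      constructor <;> linarith
  rw [hset]


lemma gauss_singleton (x : ℝ) : gaussianReal 0 1 {x} = 0 :=
  (gaussianReal_absolutelyContinuous 0 one_ne_zero) (Real.volume_singleton)

lemma gauss_neg_one_map : (gaussianReal 0 1).map (fun x : ℝ => -1 * x) = gaussianReal 0 1 := by
  have := gaussianReal_map_const_mul (μ := 0) (v := 1) (-1)
  have h1 : (NNReal.mk ((-1:ℝ)^2) (sq_nonneg _)) * 1 = 1 := by
    ext; norm_num
  rw [h1] at this
  simpa using this

lemma cdf_add_cdf_neg (u : ℝ) : stdNormCDF (-u) + stdNormCDF u = 1 := by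
  have hIic : gaussianReal 0 1 (Set.Iic (-u)) = gaussianReal 0 1 (Set.Ici u) := by
    conv_lhs => rw [← gauss_neg_one_map]
    rw [Measure.map_apply (by fun_prop) measurableSet_Iic]
    congr 1
    ext x
    simp only [Set.mem_preimage, Set.mem_Iic, Set.mem_Ici]
    constructor <;> intro h <;> linarith
  have hIio : gaussianReal 0 1 (Set.Iic u) = gaussianReal 0 1 (Set.Iio u) := by
    refine le_antisymm ?_ (measure_mono Set.Iio_subset_Iic_self)
    calc gaussianReal 0 1 (Set.Iic u) = gaussianReal 0 1 (Set.Iio u ∪ {u}) := by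
          rw [Set.Iio_union_right]
      _ ≤ gaussianReal 0 1 (Set.Iio u) + gaussianReal 0 1 {u} := measure_union_le _ _
      _ = gaussianReal 0 1 (Set.Iio u) := by rw [gauss_singleton, add_zero]
  have hcompl : gaussianReal 0 1 (Set.Iio u) + gaussianReal 0 1 (Set.Ici u) = 1 := by
    have := measure_add_measure_compl (μ := gaussianReal 0 1) (measurableSet_Iio (a := u))
    rwa [Set.compl_Iio, measure_univ] at this
  have h := congrArg ENNReal.toReal hcompl
  rw [ENNReal.toReal_add (measure_ne_top _ _) (measure_ne_top _ _)] at h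
  simp only [ENNReal.toReal_one] at h
  unfold stdNormCDF
  rw [hIic, hIio]
  linarith

lemma q_eq {u : ℝ} (hu : 0 < u) :
    ((gaussianReal 0 1) (Set.Icc (-u) u)).toReal = 2 * stdNormCDF u - 1 := by
  have huu : -u ≤ u := by linarith
  have hIoc : gaussianReal 0 1 (Set.Icc (-u) u) = gaussianReal 0 1 (Set.Ioc (-u) u) := by
    refine le_antisymm ?_ (measure_mono Set.Ioc_subset_Icc_self)
    calc gaussianReal 0 1 (Set.Icc (-u) u) = gaussianReal 0 1 (Set.Ioc (-u) u ∪ {-u}) := by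
          rw [Set.Ioc_union_left huu]
      _ ≤ gaussianReal 0 1 (Set.Ioc (-u) u) + gaussianReal 0 1 {-u} := measure_union_le _ _
      _ = gaussianReal 0 1 (Set.Ioc (-u) u) := by rw [gauss_singleton, add_zero]
  have hsplit : gaussianReal 0 1 (Set.Iic (-u)) + gaussianReal 0 1 (Set.Ioc (-u) u)
      = gaussianReal 0 1 (Set.Iic u) := by
    rw [← measure_union (Set.Iic_disjoint_Ioc le_rfl) measurableSet_Ioc,
      Set.Iic_union_Ioc_eq_Iic huu]
  have h := congrArg ENNReal.toReal hsplit
  rw [ENNReal.toReal_add (measure_ne_top _ _) (measure_ne_top _ _)] at h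
  have hneg := cdf_add_cdf_neg u
  unfold stdNormCDF at *
  rw [hIoc]
  linarith



lemma conv_pointwise {a s : ℝ} (hs : 0 < s) (h1 : a^2 + s^2 = 1) (z x : ℝ) :
    gaussianPDFReal 0 1 x * gaussianPDFReal (a*x) (nvar s) z
      = gaussianPDFReal 0 1 z * gaussianPDFReal (a*z) (nvar s) x := by
  have hs2 : s^2 = 1 - a^2 := by linarith
  have hv : ((nvar s : ℝ≥0) : ℝ) = s^2 := rfl
  simp only [gaussianPDFReal, hv, NNReal.coe_one, NNReal.coe_mk, mul_one, sub_zero]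
  have hA : ∀ e1 e2 : ℝ, (Real.sqrt (2*π))⁻¹ * Real.exp e1 * ((Real.sqrt (2*π*s^2))⁻¹ * Real.exp e2)
      = (Real.sqrt (2*π))⁻¹ * (Real.sqrt (2*π*s^2))⁻¹ * Real.exp (e1+e2) := by
    intro e1 e2; rw [Real.exp_add]; ring
  rw [hA, hA]
  congr 1
  have hs0 : s^2 ≠ 0 := by positivity
  congr 1
  rw [div_add_div _ _ (by norm_num) (by positivity), div_add_div _ _ (by norm_num) (by positivity),
    div_eq_div_iff (by positivity) (by positivity)]
  linear_combination (-8*s^2*(x^2 - z^2)) * h1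

lemma conv_identity {a s : ℝ} (hs : 0 < s) (h1 : a^2 + s^2 = 1) (z : ℝ) :
    ∫ x, gaussianPDFReal 0 1 x * gaussianPDFReal (a*x) (nvar s) z
      = gaussianPDFReal 0 1 z := by
  have : (fun x => gaussianPDFReal 0 1 x * gaussianPDFReal (a*x) (nvar s) z)
      = fun x => gaussianPDFReal 0 1 z * gaussianPDFReal (a*z) (nvar s) x := by
    ext x; exact conv_pointwise hs h1 z x
  rw [this, integral_const_mul, integral_gaussianPDFReal_eq_one _ (nvar_ne_zero hs), mul_one]


lemma integral_gauss_eq (g : ℝ → ℝ) :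
    ∫ x, g x ∂(gaussianReal 0 1) = ∫ x, gaussianPDFReal 0 1 x * g x := by
  rw [gaussianReal_of_var_ne_zero 0 one_ne_zero]
  have hd : (gaussianPDF 0 1) = fun x => ((Real.toNNReal (gaussianPDFReal 0 1 x) : ℝ≥0) : ℝ≥0∞) := by
    ext x
    rfl
  rw [hd, integral_withDensity_eq_integral_smul
    (by exact (measurable_gaussianPDFReal 0 1).real_toNNReal) g]
  congr 1
  ext x
  rw [NNReal.smul_def, smul_eq_mul, Real.coe_toNNReal _ (gaussianPDFReal_nonneg 0 1 x)]


lemma pdf_le (m : ℝ) (v : ℝ≥0) (z : ℝ) : gaussianPDFReal m v z ≤ (Real.sqrt (2*π*v))⁻¹ := by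
  rw [gaussianPDFReal]
  have h1 : Real.exp (-(z-m)^2/(2*v)) ≤ 1 := by
    rw [Real.exp_le_one_iff]
    apply div_nonpos_of_nonpos_of_nonneg
    · simp [sq_nonneg]
    · positivity
  calc (Real.sqrt (2*π*v))⁻¹ * Real.exp (-(z-m)^2/(2*v))
      ≤ (Real.sqrt (2*π*v))⁻¹ * 1 := by
        apply mul_le_mul_of_nonneg_left h1
        positivity
    _ = (Real.sqrt (2*π*v))⁻¹ := mul_one _

/-- A centered Gaussian vector `(Z, Z')` with unit variances and correlation `a`,
realized as `Z = a·x + √(1-a²)·y` and `Z' = x` for `(x, y)` a pair of independent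
standard normals.  The covariance of the indicators `1{|Z| ≤ u}` and `1{|Z'| ≤ u}`
is at most `q·a²` where `q = 2Φ(u) − 1`. -/
theorem stmt16 (a u : ℝ) (ha : |a| ≤ 1/2) (hu : 0 < u)
    (μ : Measure (ℝ × ℝ)) (hμ : μ = (gaussianReal 0 1).prod (gaussianReal 0 1))
    (Z Z' : ℝ × ℝ → ℝ)
    (hZ : Z = fun p => a * p.1 + Real.sqrt (1 - a ^ 2) * p.2)
    (hZ' : Z' = fun p => p.1) :
    (∫ p, Set.indicator {y : ℝ | |y| ≤ u} (fun _ => (1 : ℝ)) (Z p) *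
        Set.indicator {y : ℝ | |y| ≤ u} (fun _ => (1 : ℝ)) (Z' p) ∂μ) -
      (∫ p, Set.indicator {y : ℝ | |y| ≤ u} (fun _ => (1 : ℝ)) (Z p) ∂μ) *
      (∫ p, Set.indicator {y : ℝ | |y| ≤ u} (fun _ => (1 : ℝ)) (Z' p) ∂μ) ≤
      (2 * stdNormCDF u - 1) * a ^ 2 := by
  have hS : {y : ℝ | |y| ≤ u} = Set.Icc (-u) u := by ext y; simp [abs_le]
  simp only [hμ, hZ, hZ', hS]
  set ν := gaussianReal 0 1 with hν
  set s := Real.sqrt (1 - a^2) with hsdef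
  have hs0 : 0 < s := hs_pos ha
  have h1 : a^2 + s^2 = 1 := by have := hs_sq ha; rw [← hsdef] at this; linarith
  set f : ℝ → ℝ := Set.indicator (Set.Icc (-u) u) (fun _ => (1:ℝ)) with hfdef
  set q : ℝ := (ν (Set.Icc (-u) u)).toReal with hqdef
  have hfmeas : Measurable f := measurable_const.indicator measurableSet_Icc
  have hf_nonneg : ∀ x, 0 ≤ f x := fun x => Set.indicator_nonneg (fun _ _ => zero_le_one) x
  have hf_le_one : ∀ x, f x ≤ 1 := by
    intro x
    by_cases h : x ∈ Set.Icc (-u) u <;> simp [hfdef, Set.indicator_apply, h]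
  have hq_f : ∫ x, f x ∂ν = q := by
    rw [hfdef, integral_indicator_const (1:ℝ) measurableSet_Icc, smul_eq_mul, mul_one]
    rfl
  set G : ℝ → ℝ := fun m => ((gaussianReal m (nvar s)) (Set.Icc (-u) u)).toReal with hGdef
  have hG_nonneg : ∀ m, 0 ≤ G m := fun m => ENNReal.toReal_nonneg
  have hInner : ∀ m : ℝ, ∫ y, f (m + s * y) ∂ν = G m := by
    intro m
    have h1 : ∫ y, f (m + s*y) ∂ν = ∫ z, f z ∂(ν.map (fun y => m + s*y)) :=
      (integral_map (φ := fun y => m + s*y) (by fun_prop)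
        hfmeas.aestronglyMeasurable).symm
    rw [h1]
    have h2 := map_affine m s
    rw [hν, h2, hfdef, integral_indicator_const (1:ℝ) measurableSet_Icc, smul_eq_mul, mul_one]
    rfl
  -- conditional bound
  have condG : ∀ m : ℝ, G m ≤ q + a^2 := by
    intro m
    have hle : (-u-m)/s ≤ (u-m)/s := by
      apply (div_le_div_iff_of_pos_right hs0).mpr
      linarith
    have h1 : G m = ∫ t in ((-u-m)/s)..((u-m)/s), phi t := by
      rw [hGdef]
      simp only
      rw [cond_measure u m s hs0, toReal_icc hle]
    have h2 : q = ∫ t in (-u)..u, phi t := by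
      rw [hqdef, hν, toReal_icc (by linarith)]
    rw [h1, h2]
    exact cond_bound_int ha hu m
  -- integrability on the product
  have hmeasL : Measurable fun p : ℝ × ℝ => a * p.1 + s * p.2 := by fun_prop
  have hIntF1 : Integrable (fun p : ℝ×ℝ => f (a*p.1 + s*p.2)) (ν.prod ν) := by
    refine Integrable.mono' (integrable_const 1) ((hfmeas.comp hmeasL).aestronglyMeasurable) ?_
    refine Filter.Eventually.of_forall fun p => ?_
    rw [Real.norm_eq_abs, abs_of_nonneg (hf_nonneg _)]
    exact hf_le_one _
  have hIntF12 : Integrable (fun p : ℝ×ℝ => f (a*p.1 + s*p.2) * f p.1) (ν.prod ν) := by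
    refine Integrable.mono' (integrable_const 1)
      (((hfmeas.comp hmeasL).mul (hfmeas.comp measurable_fst)).aestronglyMeasurable) ?_
    refine Filter.Eventually.of_forall fun p => ?_
    rw [Real.norm_eq_abs, abs_of_nonneg (mul_nonneg (hf_nonneg _) (hf_nonneg _))]
    calc f (a*p.1 + s*p.2) * f p.1 ≤ 1 * 1 :=
      mul_le_mul (hf_le_one _) (hf_le_one _) (hf_nonneg _) zero_le_one
    _ = 1 := by norm_num
  have hIntFB : Integrable (fun p : ℝ×ℝ => f p.1) (ν.prod ν) := by
    refine Integrable.mono' (integrable_const 1)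
      ((hfmeas.comp measurable_fst).aestronglyMeasurable) ?_
    refine Filter.Eventually.of_forall fun p => ?_
    rw [Real.norm_eq_abs, abs_of_nonneg (hf_nonneg _)]
    exact hf_le_one _
  -- E[B] = q
  have hEB : ∫ p : ℝ×ℝ, f p.1 ∂(ν.prod ν) = q := by
    rw [integral_prod _ hIntFB]
    simp only [integral_const, probReal_univ, one_smul]
    exact hq_f
  -- E[A] = q
  have hEA1 : ∫ p : ℝ×ℝ, f (a*p.1 + s*p.2) ∂(ν.prod ν) = ∫ x, G (a*x) ∂ν := by
    rw [integral_prod _ hIntF1]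
    exact integral_congr_ae (Filter.Eventually.of_forall fun x => hInner (a*x))
  have hC : (0:ℝ) < Real.sqrt (2*π*(nvar s)) := by
    apply Real.sqrt_pos.mpr
    have : ((nvar s : ℝ≥0) : ℝ) = s^2 := rfl
    rw [this]
    positivity
  have hIntSwap : Integrable
      (Function.uncurry fun x z => gaussianPDFReal 0 1 x * gaussianPDFReal (a*x) (nvar s) z)
      (volume.prod (volume.restrict (Set.Icc (-u) u))) := by
    have hint2 : Integrable (fun z : ℝ => (Real.sqrt (2*π*(nvar s)))⁻¹)
        (volume.restrict (Set.Icc (-u) u)) := integrable_const _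
    refine Integrable.mono' (integrable_phi.mul_prod hint2) ?_ ?_
    · apply Measurable.aestronglyMeasurable
      unfold gaussianPDFReal
      fun_prop
    · refine Filter.Eventually.of_forall fun p => ?_
      rw [Function.uncurry, Real.norm_eq_abs, abs_of_nonneg
        (mul_nonneg (gaussianPDFReal_nonneg _ _ _) (gaussianPDFReal_nonneg _ _ _))]
      exact mul_le_mul_of_nonneg_left (pdf_le _ _ _) (gaussianPDFReal_nonneg _ _ _)
  have hEA2 : ∫ x, G (a*x) ∂ν = q := by
    have hGint : ∀ m : ℝ, G m = ∫ z in Set.Icc (-u) u, gaussianPDFReal m (nvar s) z :=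
      fun m => toReal_gaussianReal_apply (nvar_ne_zero hs0) _
    calc ∫ x, G (a*x) ∂ν
        = ∫ x, gaussianPDFReal 0 1 x * (∫ z in Set.Icc (-u) u, gaussianPDFReal (a*x) (nvar s) z) := by
          rw [hν, integral_gauss_eq]
          simp_rw [hGint]
      _ = ∫ x, ∫ z in Set.Icc (-u) u, gaussianPDFReal 0 1 x * gaussianPDFReal (a*x) (nvar s) z := by
          simp_rw [integral_const_mul]
      _ = ∫ z in Set.Icc (-u) u, ∫ x, gaussianPDFReal 0 1 x * gaussianPDFReal (a*x) (nvar s) z :=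
          integral_integral_swap hIntSwap
      _ = ∫ z in Set.Icc (-u) u, gaussianPDFReal 0 1 z :=
          setIntegral_congr_fun measurableSet_Icc fun z _ => conv_identity hs0 h1 z
      _ = q := by rw [hqdef, hν, toReal_gaussianReal_apply one_ne_zero]
  have hEA : ∫ p : ℝ×ℝ, f (a*p.1 + s*p.2) ∂(ν.prod ν) = q := hEA1.trans hEA2
  -- E[AB] ≤ (q+a²)q
  have hIntqf : Integrable (fun x => (q + a^2) * f x) ν := by
    refine Integrable.const_mul ?_ _
    exact (integrable_const 1).indicator measurableSet_Icc
  have hEAB : ∫ p : ℝ×ℝ, f (a*p.1 + s*p.2) * f p.1 ∂(ν.prod ν) ≤ (q + a^2) * q := by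
    rw [integral_prod _ hIntF12]
    have hinner2 : ∀ x : ℝ, ∫ y, f (a*x + s*y) * f x ∂ν = G (a*x) * f x := by
      intro x
      rw [integral_mul_const]
      rw [hInner (a*x)]
    calc ∫ x, (∫ y, f (a*x + s*y) * f x ∂ν) ∂ν
        = ∫ x, G (a*x) * f x ∂ν :=
          integral_congr_ae (Filter.Eventually.of_forall fun x => hinner2 x)
      _ ≤ ∫ x, (q + a^2) * f x ∂ν := by
          refine integral_mono_of_nonneg ?_ hIntqf ?_
          · exact Filter.Eventually.of_forall fun x => mul_nonneg (hG_nonneg _) (hf_nonneg _)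
          · exact Filter.Eventually.of_forall fun x =>
              mul_le_mul_of_nonneg_right (condG (a*x)) (hf_nonneg x)
      _ = (q + a^2) * q := by rw [integral_const_mul, hq_f]
  -- conclude
  have hq2 : q = 2 * stdNormCDF u - 1 := by rw [hqdef, hν]; exact q_eq hu
  have final : (∫ p : ℝ×ℝ, f (a*p.1 + s*p.2) * f p.1 ∂(ν.prod ν))
      - (∫ p : ℝ×ℝ, f (a*p.1 + s*p.2) ∂(ν.prod ν)) * (∫ p : ℝ×ℝ, f p.1 ∂(ν.prod ν))
      ≤ (2 * stdNormCDF u - 1) * a^2 := by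
    rw [hEA, hEB, ← hq2]
    nlinarith [hEAB]
  exact final
end
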